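/- arXiv:2510.17285 — 4 statements merged into one kernel-verified Lean document; each statement's English description precedes it below -/
import Mathlib

section
/- Let F be a nonempty finite set (the feasible allocation set). Let Ĵ₋ᵢ : F → ℝ be the estimated social cost of all agents other than i, let cᵢ : F → ℝ be agent i's true cost, and let ĉᵢ, ĉᵢ' : F → ℝ be agent i's estimated cost under truthful and under arbitrary (possibly strategic) feedback, respectively. Define the VCG payment p(a) := (min over a'' ∈ F of Ĵ₋ᵢ(a'')) − Ĵ₋ᵢ(a) and the utility u(a) := p(a) − cᵢ(a). Suppose â minimizes a ↦ Ĵ₋ᵢ(a) + ĉᵢ(a) over F and â' minimizes a ↦ Ĵ₋ᵢ(a) + ĉᵢ'(a) over F. Then u(â') − u(â) ≤ |(cᵢ(â) − cᵢ(â')) − (ĉᵢ(â) − ĉᵢ(â'))|. In particular, if |(cᵢ(a) − cᵢ(a')) − (ĉᵢ(a) − ĉᵢ(a'))| ≤ ε for all a, a' ∈ F, then the utility gain from untruthful feedback is at most ε. -/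
/-!
Up to the constant `min Ĵ₋ᵢ`, the VCG utility of `a` is `-(Ĵ₋ᵢ a + cᵢ a)`. So the gain of `a` over
the truthful outcome `â` is `Ĵ₋ᵢ â - Ĵ₋ᵢ a + cᵢ â - cᵢ a`, and optimality of `â` for `Ĵ₋ᵢ + ĉᵢ`
bounds `Ĵ₋ᵢ â - Ĵ₋ᵢ a` by `ĉᵢ a - ĉᵢ â`.
-/

theorem vcg_utility_sub_le_of_minimizer {α F : Type*} [AddCommGroup α] [LinearOrder α]
    [IsOrderedAddMonoid α] (J c ĉ : F → α) (m : α) {a₀ : F}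
    (h : ∀ a, J a₀ + ĉ a₀ ≤ J a + ĉ a) (a : F) :
    (m - J a - c a) - (m - J a₀ - c a₀) ≤ (c a₀ - c a) - (ĉ a₀ - ĉ a) := by
  have hJ : J a₀ - J a ≤ ĉ a - ĉ a₀ := by
    rw [sub_le_sub_iff]
    simpa only [add_comm] using h a
  calc (m - J a - c a) - (m - J a₀ - c a₀) = (J a₀ - J a) + (c a₀ - c a) := by abel
    _ ≤ (ĉ a - ĉ a₀) + (c a₀ - c a) := add_le_add_left hJ _
    _ = (c a₀ - c a) - (ĉ a₀ - ĉ a) := by abel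

theorem stmt0_general {F : Type*}
    (Jmi ci chat : F → ℝ)
    (p u : F → ℝ)
    (hp : ∀ a, p a = (⨅ a'' : F, Jmi a'') - Jmi a)
    (hu : ∀ a, u a = p a - ci a)
    (ahat ahat' : F)
    (hahat : ∀ a, Jmi ahat + chat ahat ≤ Jmi a + chat a) :
    u ahat' - u ahat ≤ |(ci ahat - ci ahat') - (chat ahat - chat ahat')| ∧
      ∀ ε : ℝ, (∀ a a' : F, |(ci a - ci a') - (chat a - chat a')| ≤ ε) →
        u ahat' - u ahat ≤ ε := by
  have gain_le : u ahat' - u ahat ≤ |(ci ahat - ci ahat') - (chat ahat - chat ahat')| := by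
    simp only [hu, hp]
    exact (vcg_utility_sub_le_of_minimizer Jmi ci chat _ hahat ahat').trans (le_abs_self _)
  exact ⟨gain_le, fun ε hε => gain_le.trans (hε ahat ahat')⟩

/-- One-shot VCG with learned costs: approximate truthfulness (deterministic core).
`Jmi` is the estimated social cost of the other agents, `ci` agent `i`'s true cost,
`chat`/`chat'` the estimates under truthful/arbitrary feedback, `p` the VCG payment,
`u` the utility. -/
theorem stmt0 {F : Type*} [Fintype F] [Nonempty F]
    (Jmi ci chat chat' : F → ℝ)
    (p u : F → ℝ)
    (hp : ∀ a, p a = (⨅ a'' : F, Jmi a'') - Jmi a)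
    (hu : ∀ a, u a = p a - ci a)
    (ahat ahat' : F)
    (hahat : ∀ a, Jmi ahat + chat ahat ≤ Jmi a + chat a)
    (hahat' : ∀ a, Jmi ahat' + chat' ahat' ≤ Jmi a + chat' a) :
    u ahat' - u ahat ≤ |(ci ahat - ci ahat') - (chat ahat - chat ahat')| ∧
      ∀ ε : ℝ, (∀ a a' : F, |(ci a - ci a') - (chat a - chat a')| ≤ ε) →
        u ahat' - u ahat ≤ ε :=
  stmt0_general Jmi ci chat p u hp hu ahat ahat' hahat
end

section
/- Let F be a nonempty finite set (the feasible allocation set) contained in a set A, let Ĵ₋ᵢ : F → ℝ, let cᵢ : A → ℝ be agent i's true cost and ĉᵢ : A → ℝ its estimate learned from truthful feedback. Define the VCG payment p(a) := (min over a'' ∈ F of Ĵ₋ᵢ(a'')) − Ĵ₋ᵢ(a) and utility u(a) := p(a) − cᵢ(a). Suppose: (i) â minimizes a ↦ Ĵ₋ᵢ(a) + ĉᵢ(a) over F; (ii) min_{a∈F} (Ĵ₋ᵢ(a) + ĉᵢ(a)) ≤ min_{a∈F} Ĵ₋ᵢ(a); (iii) there exists a⁰ ∈ A with cᵢ(a⁰)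 = 0 and ĉᵢ(a⁰) = 0; and (iv) |(cᵢ(a) − cᵢ(a')) − (ĉᵢ(a) − ĉᵢ(a'))| ≤ ε for all a, a' ∈ A. Then u(â) ≥ −ε. -/
/-!
At the selected allocation the VCG payment already covers the *estimated* cost, since the
estimated social cost there is at most `min Ĵ₋ᵢ`; comparing with the zero allocation, the
learning-error bound says the true cost exceeds the estimated one by at most `ε`.
-/

theorem le_inf'_sub_of_add_le_inf' {A : Type*} (F : Finset A) (hF : F.Nonempty)
    (J c : A → ℝ) (x : A) (hmin : ∀ a ∈ F, J x + c x ≤ J a + c a)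
    (hle : F.inf' hF (fun a => J a + c a) ≤ F.inf' hF J) :
    c x ≤ F.inf' hF J - J x := by
  have hx : J x + c x ≤ F.inf' hF (fun a => J a + c a) := Finset.le_inf' hF _ hmin
  linarith

theorem le_add_of_abs_sub_sub_sub_le {A : Type*} (c ĉ : A → ℝ) (ε : ℝ) {a₀ : A}
    (hc : c a₀ = 0) (hĉ : ĉ a₀ = 0) (herr : ∀ a a', |(c a - c a') - (ĉ a - ĉ a')| ≤ ε) (a : A) :
    c a ≤ ĉ a + ε := by
  have h := (abs_le.mp (herr a a₀)).2
  rw [hc, hĉ] at h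
  linarith

theorem stmt1_general {A : Type*} (F : Finset A) (hF : F.Nonempty)
    (Jmi : A → ℝ) (ci chat : A → ℝ) (ε : ℝ)
    (p u : A → ℝ)
    (hp : ∀ a, p a = F.inf' hF Jmi - Jmi a)
    (hu : ∀ a, u a = p a - ci a)
    (ahat : A)
    (hmin : ∀ a ∈ F, Jmi ahat + chat ahat ≤ Jmi a + chat a)
    (hii : F.inf' hF (fun a => Jmi a + chat a) ≤ F.inf' hF Jmi)
    (hzero : ∃ a0 : A, ci a0 = 0 ∧ chat a0 = 0)
    (herr : ∀ a a' : A, |(ci a - ci a') - (chat a - chat a')| ≤ ε) :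
    u ahat ≥ -ε := by
  obtain ⟨a0, hc0, hchat0⟩ := hzero
  have hpay : chat ahat ≤ p ahat := hp ahat ▸ le_inf'_sub_of_add_le_inf' F hF Jmi chat ahat hmin hii
  have hcost : ci ahat ≤ chat ahat + ε := le_add_of_abs_sub_sub_sub_le ci chat ε hc0 hchat0 herr ahat
  rw [hu]
  linarith

/-- One-shot VCG with learned costs: approximate individual rationality (deterministic core).
`F` is the (nonempty finite) feasible set inside the allocation space `A`;
`a0` is a zero-cost allocation; `ε` bounds the learning error of cost differences. -/
theorem stmt1 {A : Type*} (F : Finset A) (hF : F.Nonempty)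
    (Jmi : A → ℝ) (ci chat : A → ℝ) (ε : ℝ)
    (p u : A → ℝ)
    (hp : ∀ a, p a = F.inf' hF Jmi - Jmi a)
    (hu : ∀ a, u a = p a - ci a)
    (ahat : A) (hmem : ahat ∈ F)
    (hmin : ∀ a ∈ F, Jmi ahat + chat ahat ≤ Jmi a + chat a)
    (hii : F.inf' hF (fun a => Jmi a + chat a) ≤ F.inf' hF Jmi)
    (hzero : ∃ a0 : A, ci a0 = 0 ∧ chat a0 = 0)
    (herr : ∀ a a' : A, |(ci a - ci a') - (chat a - chat a')| ≤ ε) :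
    u ahat ≥ -ε :=
  stmt1_general F hF Jmi ci chat ε p u hp hu ahat hmin hii hzero herr
end

section
/- Let K ≥ 1 and s ≥ 1 be integers and set M_j := ⌊(5/6)·K·√j⌋ for each integer j ≥ 1. Then s·K + Σ_{j=1}^{s−1} M_j ≥ (s/3)^{3/2} · K. Equivalently, the last exploration round t = Σ_{j=1}^{s−1}(K + M_j) + K of stage s satisfies s ≤ 3 · K^{-2/3} · t^{2/3}. -/
lemma sqrtSum (n : ℕ) : (2/3 : ℝ) * n * Real.sqrt n ≤ ∑ j ∈ Finset.Icc 1 n, Real.sqrt j := by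
  induction n with
  | zero => simp
  | succ n ih =>
    rw [Finset.sum_Icc_succ_top (by omega)]
    have ha0 : (0:ℝ) ≤ Real.sqrt (n+1) := Real.sqrt_nonneg _
    have hb0 : (0:ℝ) ≤ Real.sqrt n := Real.sqrt_nonneg _
    have ha : Real.sqrt (n+1) ^ 2 = (n:ℝ)+1 := Real.sq_sqrt (by positivity)
    have hb : Real.sqrt n ^ 2 = (n:ℝ) := Real.sq_sqrt (by positivity)
    have hab : Real.sqrt n ≤ Real.sqrt (n+1) := Real.sqrt_le_sqrt (by linarith)
    push_cast
    nlinarith [ih, mul_nonneg hb0 (sub_nonneg.2 hab), sq_nonneg (Real.sqrt (n+1) - Real.sqrt n),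
      mul_nonneg (mul_nonneg hb0 hb0) (sub_nonneg.2 hab)]

lemma keyIneq (n : ℕ) : (((n:ℝ)+1)/3) ^ ((3:ℝ)/2) ≤ 1 + (5/9) * n * Real.sqrt n := by
  have hx : (0:ℝ) ≤ ((n:ℝ)+1)/3 := by positivity
  rw [show (3:ℝ)/2 = (1/2:ℝ)*((3:ℕ):ℝ) by norm_num, Real.rpow_mul hx, Real.rpow_natCast,
    ← Real.sqrt_eq_rpow, Real.sqrt_div (by positivity)]
  set u := Real.sqrt ((n:ℝ)+1) with hu
  set v := Real.sqrt (n:ℝ) with hv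
  set c := Real.sqrt (3:ℝ) with hc
  have hu0 : 0 ≤ u := Real.sqrt_nonneg _
  have hv0 : 0 ≤ v := Real.sqrt_nonneg _
  have hu2 : u ^ 2 = (n:ℝ)+1 := Real.sq_sqrt (by positivity)
  have hv2 : v ^ 2 = (n:ℝ) := Real.sq_sqrt (by positivity)
  have hc2 : c ^ 2 = 3 := Real.sq_sqrt (by norm_num)
  have hc0 : 0 ≤ c := Real.sqrt_nonneg _
  have hcl : 17/10 ≤ c := by nlinarith
  have huv : u ≤ v + 1 := by nlinarith
  have hc3 : c ^ 3 = 3 * c := by nlinarith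
  have h1 : u ^ 3 ≤ (v^2+1)*(v+1) := by
    nlinarith [mul_le_mul_of_nonneg_right huv (by nlinarith : (0:ℝ) ≤ u^2)]
  rw [div_pow, div_le_iff₀ (by positivity), hc3]
  have h2 : (v^2+1)*(v+1) ≤ (1 + 5/9 * v^2 * v) * (3*c) := by
    nlinarith [mul_nonneg hv0 (sq_nonneg (v-1)),
      mul_nonneg (mul_nonneg (mul_nonneg hv0 hv0) hv0) (sub_nonneg.2 hcl)]
  calc u^3 ≤ (v^2+1)*(v+1) := h1
    _ ≤ (1 + 5/9 * v^2 * v) * (3*c) := h2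
    _ = (1 + 5/9 * (n:ℝ) * v) * (3*c) := by rw [hv2]

/-- Stage-counting lemma, exploration half: with stage lengths `K + M_j`,
`M_j = ⌊(5/6) K √j⌋`, the last exploration round of stage `s`, namely
`t = Σ_{j=1}^{s−1}(K + M_j) + K = sK + Σ_{j=1}^{s−1} M_j`, satisfies
`t ≥ (s/3)^{3/2} K`, i.e. `s ≤ 3 K^{-2/3} t^{2/3}`. -/
theorem stmt10 (K s : ℕ) (hK : 1 ≤ K) (hs : 1 ≤ s)
    (M : ℕ → ℕ) (hM : ∀ j, 1 ≤ j → M j = ⌊(5 / 6 : ℝ) * K * Real.sqrt j⌋₊) :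
    ((s : ℝ) / 3) ^ ((3 : ℝ) / 2) * K ≤ (s : ℝ) * K + ∑ j ∈ Finset.Icc 1 (s - 1), (M j : ℝ) ∧
      ∀ t : ℕ, (t : ℝ) = (∑ j ∈ Finset.Icc 1 (s - 1), ((K : ℝ) + M j)) + K →
        (s : ℝ) ≤ 3 * (K : ℝ) ^ (-(2 : ℝ) / 3) * (t : ℝ) ^ ((2 : ℝ) / 3) := by
  set n := s - 1 with hn
  have hsn : (s : ℝ) = (n : ℝ) + 1 := by
    rw [hn]; push_cast [Nat.cast_sub hs]; ring
  have hK0 : (0:ℝ) < K := by exact_mod_cast hK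
  -- term-wise lower bound for M
  have hterm : ∀ j ∈ Finset.Icc 1 n, (5/6 : ℝ) * K * Real.sqrt j - 1 ≤ (M j : ℝ) := by
    intro j hj
    simp only [Finset.mem_Icc] at hj
    rw [hM j hj.1]
    exact le_of_lt (Nat.sub_one_lt_floor _)
  have hsum : (5/9 : ℝ) * K * n * Real.sqrt n - n ≤ ∑ j ∈ Finset.Icc 1 n, (M j : ℝ) := by
    have h1 : ∑ j ∈ Finset.Icc 1 n, ((5/6 : ℝ) * K * Real.sqrt j - 1)
        ≤ ∑ j ∈ Finset.Icc 1 n, (M j : ℝ) := Finset.sum_le_sum hterm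
    have h2 : ∑ j ∈ Finset.Icc 1 n, ((5/6 : ℝ) * K * Real.sqrt j - 1)
        = (5/6 : ℝ) * K * (∑ j ∈ Finset.Icc 1 n, Real.sqrt j) - n := by
      rw [Finset.sum_sub_distrib, ← Finset.mul_sum]
      simp [Nat.card_Icc]
    have h3 := sqrtSum n
    have h4 : (5/9 : ℝ) * K * n * Real.sqrt n ≤ (5/6 : ℝ) * K * (∑ j ∈ Finset.Icc 1 n, Real.sqrt j) := by
      calc (5/9 : ℝ) * K * n * Real.sqrt n = (5/6 : ℝ) * K * ((2/3 : ℝ) * n * Real.sqrt n) := by ring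
        _ ≤ _ := by
          apply mul_le_mul_of_nonneg_left h3 (by positivity)
    linarith
  have hkey := keyIneq n
  have hmain : ((s : ℝ) / 3) ^ ((3 : ℝ) / 2) * K ≤ (s : ℝ) * K + ∑ j ∈ Finset.Icc 1 n, (M j : ℝ) := by
    have hv0 : (0:ℝ) ≤ Real.sqrt n := Real.sqrt_nonneg _
    have h5 : ((s : ℝ) / 3) ^ ((3 : ℝ) / 2) * K ≤ (1 + (5/9) * n * Real.sqrt n) * K := by
      apply mul_le_mul_of_nonneg_right _ (le_of_lt hK0)
      rw [hsn]; exact hkey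
    have h6 : (1 + (5/9) * (n:ℝ) * Real.sqrt n) * K ≤ (s : ℝ) * K + ((5/9 : ℝ) * K * n * Real.sqrt n - n) := by
      rw [hsn]
      have : (1:ℝ) ≤ K := by exact_mod_cast hK
      have hn0 : (0:ℝ) ≤ n := Nat.cast_nonneg n
      nlinarith [mul_nonneg hn0 hv0]
    linarith
  refine ⟨hmain, ?_⟩
  intro t ht
  have htv : (t : ℝ) = (s : ℝ) * K + ∑ j ∈ Finset.Icc 1 n, (M j : ℝ) := by
    rw [ht, Finset.sum_add_distrib, Finset.sum_const, Nat.card_Icc, hsn]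
    push_cast
    ring
  have hAK : ((s : ℝ) / 3) ^ ((3 : ℝ) / 2) * K ≤ (t : ℝ) := by rw [htv]; exact hmain
  have ht0 : (0:ℝ) ≤ t := Nat.cast_nonneg t
  have hA0 : (0:ℝ) ≤ ((s : ℝ) / 3) ^ ((3 : ℝ) / 2) := Real.rpow_nonneg (by positivity) _
  have hdiv : ((s : ℝ) / 3) ^ ((3 : ℝ) / 2) ≤ (t : ℝ) / K := (le_div_iff₀ hK0).mpr hAK
  have hpow := Real.rpow_le_rpow hA0 hdiv (by norm_num : (0:ℝ) ≤ (2:ℝ)/3)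
  rw [← Real.rpow_mul (by positivity : (0:ℝ) ≤ (s:ℝ)/3)] at hpow
  norm_num at hpow
  rw [Real.div_rpow ht0 (le_of_lt hK0)] at hpow
  have hKp : (0:ℝ) < (K:ℝ) ^ ((2:ℝ)/3) := Real.rpow_pos_of_pos hK0 _
  have hneg : (K : ℝ) ^ (-(2 : ℝ) / 3) = ((K:ℝ) ^ ((2:ℝ)/3))⁻¹ := by
    rw [neg_div, Real.rpow_neg (le_of_lt hK0)]
  rw [hneg]
  rw [div_le_iff₀ (by norm_num : (0:ℝ) < 3)] at hpow
  calc (s:ℝ) ≤ (t:ℝ) ^ ((2:ℝ)/3) / (K:ℝ) ^ ((2:ℝ)/3) * 3 := hpow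
    _ = 3 * ((K:ℝ) ^ ((2:ℝ)/3))⁻¹ * (t:ℝ) ^ ((2:ℝ)/3) := by field_simp
end

section
/- Let d ≥ 1 and let K be an integer with K > d(d+1)/2. Let V be a symmetric positive definite real d×d matrix, let θ*, θ̃ ∈ ℝ^d, let β > 0 and β̂ ∈ ℝ, and let γ₁, γ₂, B, L ≥ 0. Assume: (i) (θ̃ − βθ*)ᵀ V (θ̃ − βθ*) ≤ γ₁²; (ii) |β̂ − β| ≤ γ₂ and γ₂ ≤ β/2; (iii) x ∈ ℝ^d satisfies xᵀ V⁻¹ x ≤ d/(K − d(d+1)/2); and (iv) |⟨θ*, x⟩| ≤ 2·B·L. Then β̂ ≥ β/2 > 0 and, with θ̂ := θ̃ / β̂, |⟨θ̂ − θ*, x⟩| ≤ (2γ₁/β) · √(d/(K − d(d+1)/2)) + (4·B·L·γ₂)/β. -/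
open Matrix

private lemma symm_bilin {d : ℕ} {V : Matrix (Fin d) (Fin d) ℝ} (hVsymm : V.IsSymm)
    (a b : Fin d → ℝ) : a ⬝ᵥ V *ᵥ b = b ⬝ᵥ V *ᵥ a := by
  rw [dotProduct_mulVec, ← mulVec_transpose, hVsymm.eq, dotProduct_comm]

private lemma cs_posdef {d : ℕ} {V : Matrix (Fin d) (Fin d) ℝ} (hVsymm : V.IsSymm)
    (hV : V.PosDef) (u x : Fin d → ℝ) :
    (u ⬝ᵥ x) ^ 2 ≤ (u ⬝ᵥ V *ᵥ u) * (x ⬝ᵥ V⁻¹ *ᵥ x) := by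
  have hdet : IsUnit V.det := isUnit_iff_ne_zero.mpr hV.det_pos.ne'
  set z : Fin d → ℝ := V⁻¹ *ᵥ x with hz
  have hVz : V *ᵥ z = x := by
    rw [hz, mulVec_mulVec, mul_nonsing_inv V hdet, one_mulVec]
  have hzVz : z ⬝ᵥ V *ᵥ z = x ⬝ᵥ V⁻¹ *ᵥ x := by
    rw [hVz, dotProduct_comm]
  have huVz : u ⬝ᵥ V *ᵥ z = u ⬝ᵥ x := by rw [hVz]
  have hzVu : z ⬝ᵥ V *ᵥ u = u ⬝ᵥ x := by rw [symm_bilin hVsymm, huVz]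
  have hquad : ∀ t : ℝ, 0 ≤ (u ⬝ᵥ V *ᵥ u) * (t * t) + (2 * (u ⬝ᵥ x)) * t
      + x ⬝ᵥ V⁻¹ *ᵥ x := by
    intro t
    have h0 := hV.posSemidef.dotProduct_mulVec_nonneg (z + t • u)
    simp only [star_trivial] at h0
    have hexp : (z + t • u) ⬝ᵥ V *ᵥ (z + t • u)
        = (u ⬝ᵥ V *ᵥ u) * (t * t) + (2 * (u ⬝ᵥ x)) * t + x ⬝ᵥ V⁻¹ *ᵥ x := by
      simp only [mulVec_add, mulVec_smul, add_dotProduct, dotProduct_add,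
        smul_dotProduct, dotProduct_smul, smul_eq_mul, hzVz, huVz, hzVu]
      ring
    linarith [hexp ▸ h0]
  have hdisc := discrim_le_zero hquad
  rw [discrim] at hdisc
  nlinarith [hdisc]

/-- Learning-error bound with unknown Bradley–Terry rationality parameter `β`: given a
confidence bound on the scaled parameter `θ̃ ≈ βθ*`, an estimate `β̂` of `β` with
`|β̂ − β| ≤ γ₂ ≤ β/2`, the D-optimal prediction-variance bound on `x`, and `|⟨θ*, x⟩| ≤ 2BL`,
the estimate `θ̂ = θ̃/β̂` satisfies the stated prediction-error bound. -/
theorem stmt14 (d K : ℕ) (hd : 1 ≤ d) (hK : (d : ℝ) * (d + 1) / 2 < K)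
    (V : Matrix (Fin d) (Fin d) ℝ) (hVsymm : V.IsSymm) (hV : V.PosDef)
    (θstar θtilde : Fin d → ℝ) (β βhat : ℝ) (hβ : 0 < β)
    (γ1 γ2 B L : ℝ) (hγ1 : 0 ≤ γ1) (hγ2 : 0 ≤ γ2) (hB : 0 ≤ B) (hL : 0 ≤ L)
    (h1 : (θtilde - β • θstar) ⬝ᵥ V *ᵥ (θtilde - β • θstar) ≤ γ1 ^ 2)
    (h2 : |βhat - β| ≤ γ2) (h2' : γ2 ≤ β / 2)
    (x : Fin d → ℝ)
    (h3 : x ⬝ᵥ V⁻¹ *ᵥ x ≤ (d : ℝ) / ((K : ℝ) - d * (d + 1) / 2))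
    (h4 : |θstar ⬝ᵥ x| ≤ 2 * B * L) :
    β / 2 ≤ βhat ∧ 0 < β / 2 ∧
      |(βhat⁻¹ • θtilde - θstar) ⬝ᵥ x| ≤
        (2 * γ1 / β) * Real.sqrt ((d : ℝ) / ((K : ℝ) - d * (d + 1) / 2)) +
          4 * B * L * γ2 / β := by
  have habs := abs_le.mp h2
  have hβhat : β / 2 ≤ βhat := by linarith [habs.1]
  have hβhat0 : 0 < βhat := by linarith
  refine ⟨hβhat, by linarith, ?_⟩
  set u : Fin d → ℝ := θtilde - β • θstar with hu
  set ρ : ℝ := (d : ℝ) / ((K : ℝ) - d * (d + 1) / 2) with hρ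
  have hρ0 : 0 ≤ ρ := by
    apply div_nonneg (by positivity)
    linarith
  -- Cauchy–Schwarz bound on ⟨u, x⟩
  have hcs : (u ⬝ᵥ x) ^ 2 ≤ γ1 ^ 2 * ρ := by
    have h := cs_posdef hVsymm hV u x
    have hx0 : 0 ≤ x ⬝ᵥ V⁻¹ *ᵥ x :=
      star_trivial x ▸ hV.inv.posSemidef.dotProduct_mulVec_nonneg x
    nlinarith [hV.posSemidef.dotProduct_mulVec_nonneg u, (star_trivial u ▸ hV.posSemidef.dotProduct_mulVec_nonneg u : (0:ℝ) ≤ u ⬝ᵥ V *ᵥ u)]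
  have hux : |u ⬝ᵥ x| ≤ γ1 * Real.sqrt ρ := by
    have h1' : |u ⬝ᵥ x| = Real.sqrt ((u ⬝ᵥ x) ^ 2) := (Real.sqrt_sq_eq_abs _).symm
    rw [h1']
    calc Real.sqrt ((u ⬝ᵥ x) ^ 2) ≤ Real.sqrt (γ1 ^ 2 * ρ) := Real.sqrt_le_sqrt hcs
      _ = γ1 * Real.sqrt ρ := by
          rw [Real.sqrt_mul (by positivity), Real.sqrt_sq hγ1]
  -- decomposition
  have hdecomp : (βhat⁻¹ • θtilde - θstar) ⬝ᵥ x
      = βhat⁻¹ * (u ⬝ᵥ x) + ((β - βhat) / βhat) * (θstar ⬝ᵥ x) := by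
    have : βhat⁻¹ • θtilde - θstar
        = βhat⁻¹ • u + ((β - βhat) / βhat) • θstar := by
      rw [hu]
      funext i
      simp only [Pi.sub_apply, Pi.add_apply, Pi.smul_apply, smul_eq_mul]
      field_simp
      ring
    rw [this, add_dotProduct, smul_dotProduct, smul_dotProduct, smul_eq_mul, smul_eq_mul]
  rw [hdecomp]
  have hinv : βhat⁻¹ ≤ 2 / β := by
    rw [div_eq_mul_inv]
    calc βhat⁻¹ ≤ (β / 2)⁻¹ := by
          apply inv_anti₀ (by linarith) hβhat
      _ = 2 * β⁻¹ := by rw [div_eq_mul_inv, mul_inv, inv_inv, mul_comm]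
  have hinv0 : 0 < βhat⁻¹ := inv_pos.mpr hβhat0
  have h2abs : |β - βhat| ≤ γ2 := by rw [abs_sub_comm]; exact h2
  calc |βhat⁻¹ * (u ⬝ᵥ x) + ((β - βhat) / βhat) * (θstar ⬝ᵥ x)|
      ≤ |βhat⁻¹ * (u ⬝ᵥ x)| + |((β - βhat) / βhat) * (θstar ⬝ᵥ x)| := abs_add_le _ _
    _ = βhat⁻¹ * |u ⬝ᵥ x| + (|β - βhat| / βhat) * |θstar ⬝ᵥ x| := by
        rw [abs_mul, abs_mul, abs_div, abs_of_pos hinv0, abs_of_pos hβhat0]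
    _ ≤ (2 / β) * (γ1 * Real.sqrt ρ) + (γ2 / (β / 2)) * (2 * B * L) := by
        apply add_le_add
        · apply mul_le_mul hinv hux (abs_nonneg _) (by positivity)
        · apply mul_le_mul _ h4 (abs_nonneg _) (by positivity)
          apply div_le_div₀ hγ2 h2abs (by linarith) hβhat
    _ = (2 * γ1 / β) * Real.sqrt ρ + 4 * B * L * γ2 / β := by
        field_simp
        ring
end
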